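/- Let G be the niche graph of a bipartite tournament. Then every connected component of G contains at most 2·ω(G) vertices, where ω(G) is the clique number of G, and |V(G)| ≤ 4·ω(G). -/

import Mathlib

structure BipTournament (α : Type*) where
  U : Set α
  V : Set α
  A : α → α → Prop
  disj : Disjoint U V
  cover : U ∪ V = Set.univ
  orient : ∀ u ∈ U, ∀ v ∈ V, Xor' (A u v) (A v u)
  arcs : ∀ x y, A x y → (x ∈ U ∧ y ∈ V) ∨ (x ∈ V ∧ y ∈ U)

def BipTournament.outN {α : Type*} (D : BipTournament α) (x : α) : Set α := {y | D.A x y}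

def BipTournament.inN {α : Type*} (D : BipTournament α) (x : α) : Set α := {y | D.A y x}

def BipTournament.niche {α : Type*} (D : BipTournament α) : SimpleGraph α where
  Adj x y := x ≠ y ∧ ((∃ w, D.A x w ∧ D.A y w) ∨ (∃ w, D.A w x ∧ D.A w y))
  symm := ⟨by
    rintro x y ⟨h, h'⟩
    exact ⟨h.symm, h'.imp (fun ⟨w, a, b⟩ => ⟨w, b, a⟩) (fun ⟨w, a, b⟩ => ⟨w, b, a⟩)⟩⟩
  loopless := ⟨fun x h => h.1 rfl⟩

noncomputable def cliqueNum {α : Type*} (G : SimpleGraph α) : ℕ :=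
  sSup {n | ∃ s : Finset α, G.IsNClique n s}

/-!
In a bipartite tournament every niche-graph edge joins two vertices of the same part, since
two vertices with a common in- or out-neighbour lie on the same side. Hence every connected
component lies inside one part. A part is at most twice the clique number: any vertex `w` of
the other part is joined to all of it, so the part is covered by the in-neighbourhood and the
out-neighbourhood of `w`, and each of these is a clique of the niche graph.
-/

theorem cliqueNum_eq_cliqueNum {α : Type*} (G : SimpleGraph α) : cliqueNum G = G.cliqueNum :=
  rfl

theorem ncard_le_cliqueNum_of_isClique {α : Type*} [Finite α] {G : SimpleGraph α} {s : Set α}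
    (hs : G.IsClique s) : s.ncard ≤ cliqueNum G := by
  have := Fintype.ofFinite α
  classical
  rw [Set.ncard_eq_toFinset_card', cliqueNum_eq_cliqueNum]
  exact SimpleGraph.IsClique.card_le_cliqueNum (tc := by simpa using hs)

namespace BipTournament

variable {α : Type*} (D : BipTournament α)

theorem isCompl_U_V : IsCompl D.U D.V :=
  ⟨D.disj, codisjoint_iff.mpr D.cover⟩

theorem compl_U : D.Uᶜ = D.V :=
  D.isCompl_U_V.compl_eq

theorem mem_V_iff_notMem_U {x : α} : x ∈ D.V ↔ x ∉ D.U := by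
  rw [← D.compl_U, Set.mem_compl_iff]

theorem mem_U_iff_notMem_U_of_A {x y : α} (h : D.A x y) : x ∈ D.U ↔ y ∉ D.U := by
  rcases D.arcs x y h with ⟨hx, hy⟩ | ⟨hx, hy⟩
  · exact iff_of_true hx (D.mem_V_iff_notMem_U.mp hy)
  · exact iff_of_false (D.mem_V_iff_notMem_U.mp hx) (not_not_intro hy)

theorem mem_U_iff_of_niche_adj {x y : α} (h : D.niche.Adj x y) : x ∈ D.U ↔ y ∈ D.U := by
  obtain ⟨-, ⟨w, hxw, hyw⟩ | ⟨w, hwx, hwy⟩⟩ := h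
  · rw [D.mem_U_iff_notMem_U_of_A hxw, D.mem_U_iff_notMem_U_of_A hyw]
  · exact not_iff_not.mp
      ((D.mem_U_iff_notMem_U_of_A hwx).symm.trans (D.mem_U_iff_notMem_U_of_A hwy))

theorem mem_U_iff_of_niche_reachable {x y : α} (h : D.niche.Reachable x y) :
    x ∈ D.U ↔ y ∈ D.U := by
  obtain ⟨p⟩ := h
  induction p with
  | nil => rfl
  | cons hadj _ ih => exact (D.mem_U_iff_of_niche_adj hadj).trans ih

theorem isClique_inN (w : α) : D.niche.IsClique (D.inN w) :=
  fun _ hx _ hy hxy => ⟨hxy, Or.inl ⟨w, hx, hy⟩⟩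

theorem isClique_outN (w : α) : D.niche.IsClique (D.outN w) :=
  fun _ hx _ hy hxy => ⟨hxy, Or.inr ⟨w, hx, hy⟩⟩

theorem ncard_le_two_mul_cliqueNum [Finite α] {s : Set α} {w : α}
    (hs : s ⊆ D.inN w ∪ D.outN w) : s.ncard ≤ 2 * cliqueNum D.niche :=
  calc s.ncard ≤ (D.inN w ∪ D.outN w).ncard := Set.ncard_le_ncard hs
    _ ≤ (D.inN w).ncard + (D.outN w).ncard := Set.ncard_union_le _ _
    _ ≤ cliqueNum D.niche + cliqueNum D.niche :=
        add_le_add (ncard_le_cliqueNum_of_isClique (D.isClique_inN w))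
          (ncard_le_cliqueNum_of_isClique (D.isClique_outN w))
    _ = 2 * cliqueNum D.niche := (two_mul _).symm

theorem ncard_U_le [Finite α] (hV : D.V.Nonempty) : D.U.ncard ≤ 2 * cliqueNum D.niche := by
  obtain ⟨v, hv⟩ := hV
  refine D.ncard_le_two_mul_cliqueNum (w := v) fun u hu => ?_
  rcases D.orient u hu v hv with ⟨huv, -⟩ | ⟨hvu, -⟩
  exacts [Or.inl huv, Or.inr hvu]

theorem ncard_V_le [Finite α] (hU : D.U.Nonempty) : D.V.ncard ≤ 2 * cliqueNum D.niche := by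
  obtain ⟨u, hu⟩ := hU
  refine D.ncard_le_two_mul_cliqueNum (w := u) fun v hv => ?_
  rcases D.orient u hu v hv with ⟨huv, -⟩ | ⟨hvu, -⟩
  exacts [Or.inr huv, Or.inl hvu]

theorem setOf_niche_reachable_subset (x : α) :
    {y | D.niche.Reachable x y} ⊆ D.U ∨ {y | D.niche.Reachable x y} ⊆ D.V := by
  by_cases hx : x ∈ D.U
  · exact Or.inl fun y hy => (D.mem_U_iff_of_niche_reachable hy).mp hx
  · exact Or.inr fun y hy => D.mem_V_iff_notMem_U.mpr fun hyU =>
      hx ((D.mem_U_iff_of_niche_reachable hy).mpr hyU)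

theorem ncard_U_add_ncard_V [Finite α] : D.U.ncard + D.V.ncard = Nat.card α := by
  rw [← D.compl_U, Set.ncard_add_ncard_compl]

end BipTournament

theorem stmt18 {α : Type*} [Fintype α] (D : BipTournament α)
    (hU : D.U.Nonempty) (hV : D.V.Nonempty) :
    (∀ x : α, {y | D.niche.Reachable x y}.ncard ≤ 2 * cliqueNum D.niche) ∧
    Fintype.card α ≤ 4 * cliqueNum D.niche := by
  refine ⟨fun x => ?_, ?_⟩
  · rcases D.setOf_niche_reachable_subset x with hsub | hsub
    · exact (Set.ncard_le_ncard hsub).trans (D.ncard_U_le hV)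
    · exact (Set.ncard_le_ncard hsub).trans (D.ncard_V_le hU)
  · rw [← Nat.card_eq_fintype_card, ← D.ncard_U_add_ncard_V]
    linarith [D.ncard_U_le hV, D.ncard_V_le hU]
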